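/- If K is a compact line and G : K → ℝ has bounded variation, then every continuous function f : K → ℝ is G-integrable, and |∫_K f dG| ≤ |f(0_K)G(0_K)| + (sup_{x∈K} |f(x)|)·Var(G,K). -/

import Mathlib

open Set Filter MeasureTheory

/-- A tagged partition of the interval `[a,b]` in a linear order `K`. -/
structure TaggedPartition (K : Type*) [LinearOrder K] (a b : K) where
  n : ℕ
  x : ℕ → K
  t : ℕ → K
  x_zero : x 0 = a
  x_last : x n = b
  mono : ∀ i < n, x i ≤ x (i + 1)
  tag_mem : ∀ i < n, t (i + 1) ∈ Set.Icc (x i) (x (i + 1))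

/-- A gauge on the interval `[a,b]` of `K`: each point of `[a,b]` is assigned a
relatively open subinterval of `[a,b]` containing it. -/
def IsGauge (K : Type*) [LinearOrder K] [TopologicalSpace K] (a b : K) (δ : K → Set K) : Prop :=
  ∀ x ∈ Set.Icc a b, x ∈ δ x ∧ (δ x).OrdConnected ∧ ∃ U, IsOpen U ∧ δ x = U ∩ Set.Icc a b

/-- A tagged partition is `δ`-fine when `(x_{i-1}, x_i] ⊆ δ(t_i)` for all `i`. -/
def TaggedPartition.IsFine {K : Type*} [LinearOrder K] {a b : K}
    (P : TaggedPartition K a b) (δ : K → Set K) : Prop :=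
  ∀ i < P.n, Set.Ioc (P.x i) (P.x (i + 1)) ⊆ δ (P.t (i + 1))

/-- The Riemann sum `S(f,G,P) = f(a)G(a) + Σ f(t_i)(G(x_i) - G(x_{i-1}))`. -/
noncomputable def riemannSum {K : Type*} [LinearOrder K] {a b : K}
    (f G : K → ℝ) (P : TaggedPartition K a b) : ℝ :=
  f a * G a + ∑ i ∈ Finset.range P.n, f (P.t (i + 1)) * (G (P.x (i + 1)) - G (P.x i))

/-- `f` has Kurzweil–Stieltjes integral `A` with respect to `G` over `[a,b]`. -/
def HasIntegral {K : Type*} [LinearOrder K] [TopologicalSpace K]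
    (f G : K → ℝ) (a b : K) (A : ℝ) : Prop :=
  ∀ ε : ℝ, 0 < ε → ∃ δ : K → Set K, IsGauge K a b δ ∧
    ∀ P : TaggedPartition K a b, P.IsFine δ → |riemannSum f G P - A| < ε

/-- `G` is amenable: right-continuous everywhere, and regulated (left limits exist at
left-dense points, right limits at right-dense points). -/
def Amenable {K : Type*} [LinearOrder K] [TopologicalSpace K] [BoundedOrder K]
    (G : K → ℝ) : Prop :=
  (∀ x : K, ContinuousWithinAt G (Set.Ici x) x) ∧
  (∀ x : K, x ≠ ⊥ → (¬ ∃ y, y ⋖ x) → ∃ l, Filter.Tendsto G (nhdsWithin x (Set.Iio x)) (nhds l)) ∧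
  (∀ x : K, x ≠ ⊤ → (¬ ∃ y, x ⋖ y) → ∃ l, Filter.Tendsto G (nhdsWithin x (Set.Ioi x)) (nhds l))

open Classical in
/-- `L_G(x)`: `0` at the least element, `G` of the immediate predecessor if `x` is
left-isolated, and the left limit of `G` at `x` if `x` is left-dense. -/
noncomputable def Lfun {K : Type*} [LinearOrder K] [TopologicalSpace K] [BoundedOrder K]
    (G : K → ℝ) (x : K) : ℝ :=
  if x = ⊥ then 0
  else if h : ∃ y, y ⋖ x then G h.choose
  else Function.leftLim G x

/-- The set of variation sums of `G` over divisions of `[a,b]`. -/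
def varSums {K : Type*} [LinearOrder K] (G : K → ℝ) (a b : K) : Set ℝ :=
  {v | ∃ (n : ℕ) (x : ℕ → K), x 0 = a ∧ x n = b ∧ (∀ i < n, x i ≤ x (i + 1)) ∧
        v = ∑ i ∈ Finset.range n, |G (x (i + 1)) - G (x i)|}

/-- `S` is null for the outer measure induced by `μ` via covers by countably many
open intervals. -/
def GNull {K : Type*} [LinearOrder K] [TopologicalSpace K] [MeasurableSpace K]
    (μ : MeasureTheory.Measure K) (S : Set K) : Prop :=
  ∀ ε : ℝ, 0 < ε → ∃ I : ℕ → Set K, (∀ n, IsOpen (I n) ∧ (I n).OrdConnected) ∧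
    S ⊆ ⋃ n, I n ∧ ∑' n, μ (I n) < ENNReal.ofReal ε

/-! Fine partitions exist by Cousin's lemma: the supremum of the points `b` for which `[⊥, b]`
has a `δ`-fine partition is attained and equals `⊤`. Let `δ t` be the order-connected component
of `t` in `{x | |f x - f t| < ε}`. Two `δ`-fine partitions `P`, `Q` are compared on their common
refinement: both Riemann sums split along the pieces `(x_i, x_{i+1}] ∩ (y_k, y_{k+1}]`, the two
tags of a nonempty piece have `f`-values within `2ε`, and the `G`-increments over the pieces form
a variation sum, so the sums differ by at most `2 ε Var(G)`. The Cauchy criterion gives the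
integral, and the bound `|S(f,G,P)| ≤ |f(⊥)G(⊥)| + sup |f| · Var(G)` passes to it. -/

open Topology

namespace TaggedPartition

variable {K : Type*} [LinearOrder K] {a b c : K}

lemma monotoneOn_x (P : TaggedPartition K a b) : MonotoneOn P.x (Iic P.n) :=
  monotoneOn_of_le_add_one ordConnected_Iic fun i _ _ hi => P.mono i hi

lemma x_mem_Icc (P : TaggedPartition K a b) {i : ℕ} (hi : i ≤ P.n) : P.x i ∈ Icc a b := by
  constructor
  · simpa [P.x_zero] using P.monotoneOn_x (Nat.zero_le _ : 0 ≤ P.n) hi (Nat.zero_le i)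
  · simpa [P.x_last] using P.monotoneOn_x hi (le_refl P.n) hi

lemma sum_abs_sub_mem_varSums (G : K → ℝ) (P : TaggedPartition K a b) :
    ∑ i ∈ Finset.range P.n, |G (P.x (i + 1)) - G (P.x i)| ∈ varSums G a b :=
  ⟨P.n, P.x, P.x_zero, P.x_last, P.mono, rfl⟩

lemma sum_sub_eq (G : K → ℝ) (P : TaggedPartition K a b) :
    ∑ i ∈ Finset.range P.n, (G (P.x (i + 1)) - G (P.x i)) = G b - G a := by
  rw [Finset.sum_range_sub (fun i => G (P.x i)), P.x_last, P.x_zero]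

lemma IsFine.mono {P : TaggedPartition K a b} {δ δ' : K → Set K} (hP : P.IsFine δ)
    (h : δ ≤ δ') : P.IsFine δ' :=
  fun i hi => (hP i hi).trans (h _)

def nil (a : K) : TaggedPartition K a a where
  n := 0
  x _ := a
  t _ := a
  x_zero := rfl
  x_last := rfl
  mono i hi := absurd hi (Nat.not_lt_zero i)
  tag_mem i hi := absurd hi (Nat.not_lt_zero i)

lemma nil_isFine (a : K) (δ : K → Set K) : (nil a).IsFine δ :=
  fun i hi => absurd hi (Nat.not_lt_zero i)

def snoc (P : TaggedPartition K a b) (hbc : b ≤ c) (τ : K) (hτ : τ ∈ Icc b c) :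
    TaggedPartition K a c where
  n := P.n + 1
  x i := if i ≤ P.n then P.x i else c
  t i := if i ≤ P.n then P.t i else τ
  x_zero := by simp [P.x_zero]
  x_last := by simp
  mono i hi := by
    rcases (Nat.lt_succ_iff.1 hi).lt_or_eq with hi | rfl
    · simpa [hi.le, Nat.succ_le_of_lt hi] using P.mono i hi
    · simpa [P.x_last] using hbc
  tag_mem i hi := by
    rcases (Nat.lt_succ_iff.1 hi).lt_or_eq with hi | rfl
    · simpa [hi.le, Nat.succ_le_of_lt hi] using P.tag_mem i hi
    · simpa [P.x_last] using hτ

lemma IsFine.snoc {P : TaggedPartition K a b} {δ : K → Set K} (hP : P.IsFine δ) (hbc : b ≤ c)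
    {τ : K} (hτ : τ ∈ Icc b c) (hδ : Ioc b c ⊆ δ τ) : (P.snoc hbc τ hτ).IsFine δ := by
  intro i hi
  rcases (Nat.lt_succ_iff.1 hi).lt_or_eq with hi | rfl
  · simpa [TaggedPartition.snoc, hi.le, Nat.succ_le_of_lt hi] using hP i hi
  · simpa [TaggedPartition.snoc, P.x_last] using hδ

end TaggedPartition

section Gauge

variable {K : Type*} [LinearOrder K] [TopologicalSpace K]

lemma IsGauge.inf {a b : K} {δ₁ δ₂ : K → Set K} (h₁ : IsGauge K a b δ₁) (h₂ : IsGauge K a b δ₂) :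
    IsGauge K a b (δ₁ ⊓ δ₂) := by
  intro x hx
  obtain ⟨hx₁, hc₁, U₁, hU₁, hδ₁⟩ := h₁ x hx
  obtain ⟨hx₂, hc₂, U₂, hU₂, hδ₂⟩ := h₂ x hx
  refine ⟨⟨hx₁, hx₂⟩, hc₁.inter hc₂, U₁ ∩ U₂, hU₁.inter hU₂, ?_⟩
  rw [Pi.inf_apply, hδ₁, hδ₂]
  exact (inter_inter_distrib_right _ _ _).symm

lemma IsOpen.ordConnectedComponent [OrderTopology K] {s : Set K} (hs : IsOpen s) (x : K) :
    IsOpen (ordConnectedComponent s x) :=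
  isOpen_iff_mem_nhds.2 fun y hy => by
    rw [ordConnectedComponent_eq (mem_ordConnectedComponent.1 hy)]
    exact ordConnectedComponent_mem_nhds.2 (hs.mem_nhds (ordConnectedComponent_subset hy))

variable [BoundedOrder K]

lemma isGauge_top : IsGauge K ⊥ ⊤ ⊤ :=
  fun _ _ => ⟨mem_univ _, ordConnected_univ, univ, isOpen_univ, by simp⟩

lemma IsGauge.mem_nhds {δ : K → Set K} (hδ : IsGauge K ⊥ ⊤ δ) (x : K) : δ x ∈ 𝓝 x := by
  obtain ⟨hx, -, U, hU, hδU⟩ := hδ x ⟨bot_le, le_top⟩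
  rw [Icc_bot_top, inter_univ] at hδU
  exact hδU ▸ hU.mem_nhds (hδU ▸ hx)

variable [OrderTopology K]

lemma isGauge_ordConnectedComponent {s : K → Set K} (hs : ∀ t, IsOpen (s t))
    (hmem : ∀ t, t ∈ s t) : IsGauge K ⊥ ⊤ fun t => ordConnectedComponent (s t) t :=
  fun t _ => ⟨self_mem_ordConnectedComponent.2 (hmem t), inferInstance,
    _, (hs t).ordConnectedComponent t, by rw [Icc_bot_top, inter_univ]⟩

end Gauge

section Cousin

variable {K : Type*} [LinearOrder K] [TopologicalSpace K] [OrderTopology K] [BoundedOrder K]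
  {δ : K → Set K}

lemma exists_isFine_of_isLUB (hδ : IsGauge K ⊥ ⊤ δ) {c : K}
    (hc : IsLUB {b | ∃ P : TaggedPartition K ⊥ b, P.IsFine δ} c) :
    ∃ P : TaggedPartition K ⊥ c, P.IsFine δ := by
  rcases eq_bot_or_bot_lt c with rfl | hc₀
  · exact ⟨.nil ⊥, TaggedPartition.nil_isFine ⊥ δ⟩
  obtain ⟨l, hlc, hl⟩ := exists_Ioc_subset_of_mem_nhds (hδ.mem_nhds c) ⟨⊥, hc₀⟩
  obtain ⟨b, ⟨P, hP⟩, hlb, hbc⟩ := hc.exists_between hlc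
  exact ⟨P.snoc hbc c ⟨hbc, le_rfl⟩,
    hP.snoc hbc _ ((Ioc_subset_Ioc_left hlb.le).trans hl)⟩

lemma exists_isFine_of_lt_top (hδ : IsGauge K ⊥ ⊤ δ) {c : K} (hc : c < ⊤)
    (P : TaggedPartition K ⊥ c) (hP : P.IsFine δ) :
    ∃ d, c < d ∧ ∃ Q : TaggedPartition K ⊥ d, Q.IsFine δ := by
  obtain ⟨u, hcu, hu⟩ := exists_Ico_subset_of_mem_nhds (hδ.mem_nhds c) ⟨⊤, hc⟩
  by_cases hdense : ∃ d, c < d ∧ d < u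
  · obtain ⟨d, hcd, hdu⟩ := hdense
    exact ⟨d, hcd, P.snoc hcd.le c ⟨le_rfl, hcd.le⟩,
      hP.snoc hcd.le _ fun y hy => hu ⟨hy.1.le, hy.2.trans_lt hdu⟩⟩
  · -- `u` is the successor of `c`, so `(c, u] = {u}` lies in `δ u`.
    push Not at hdense
    refine ⟨u, hcu, P.snoc hcu.le u ⟨hcu.le, le_rfl⟩, hP.snoc hcu.le _ fun y hy => ?_⟩
    obtain rfl : y = u := le_antisymm hy.2 (hdense y hy.1)
    exact (hδ y ⟨bot_le, le_top⟩).1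

variable [CompactSpace K]

/-- Cousin's lemma. -/
theorem exists_isFine_of_isGauge (hδ : IsGauge K ⊥ ⊤ δ) :
    ∃ P : TaggedPartition K ⊥ ⊤, P.IsFine δ := by
  set T := {b | ∃ P : TaggedPartition K ⊥ b, P.IsFine δ}
  obtain ⟨c, -, hc⟩ := isClosed_closure.isCompact.exists_isLUB
    (⟨⊥, subset_closure ⟨.nil ⊥, TaggedPartition.nil_isFine ⊥ δ⟩⟩ : (closure T).Nonempty)
  rw [isLUB_congr (upperBounds_closure T)] at hc
  obtain ⟨P, hP⟩ := exists_isFine_of_isLUB hδ hc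
  rcases eq_top_or_lt_top c with rfl | hct
  · exact ⟨P, hP⟩
  obtain ⟨d, hcd, hd⟩ := exists_isFine_of_lt_top hδ hct P hP
  exact absurd (hc.1 hd) hcd.not_ge

end Cousin

section Variation

variable {K : Type*} [LinearOrder K] (G : K → ℝ)

lemma zero_mem_varSums (a : K) : 0 ∈ varSums G a a :=
  ⟨0, fun _ => a, rfl, rfl, fun i hi => absurd hi (Nat.not_lt_zero i), by simp⟩

lemma abs_sub_mem_varSums {a b : K} (hab : a ≤ b) : |G b - G a| ∈ varSums G a b :=
  ⟨1, fun i => if i = 0 then a else b, rfl, rfl, by simpa using hab, by simp⟩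

lemma add_mem_varSums {a b c : K} {v w : ℝ} (hv : v ∈ varSums G a b) (hw : w ∈ varSums G b c) :
    v + w ∈ varSums G a c := by
  obtain ⟨n, x, rfl, rfl, hx, rfl⟩ := hv
  obtain ⟨m, y, hy₀, rfl, hy, rfl⟩ := hw
  set z : ℕ → K := fun i => if i ≤ n then x i else y (i - n)
  have hz : ∀ i, n ≤ i → z i = y (i - n) := fun i hi => by
    rcases hi.eq_or_lt with rfl | hi
    · simp [z, hy₀]
    · simp [z, hi.not_ge]
  refine ⟨n + m, z, by simp [z], by simp [hz], fun i hi => ?_, ?_⟩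
  · rcases lt_or_ge i n with hin | hni
    · simpa [z, hin.le, Nat.succ_le_of_lt hin] using hx i hin
    · rw [hz i hni, hz (i + 1) (by omega), Nat.sub_add_comm hni]
      exact hy _ (by omega)
  · rw [Finset.sum_range_add]
    congr 1
    · refine Finset.sum_congr rfl fun i hi => ?_
      have hin := Finset.mem_range.1 hi
      simp [z, hin.le, Nat.succ_le_of_lt hin]
    · refine Finset.sum_congr rfl fun k _ => ?_
      rw [hz _ (by omega), hz _ (by omega), add_assoc, Nat.add_sub_cancel_left,
        Nat.add_sub_cancel_left]

lemma sum_mem_varSums (x : ℕ → K) (v : ℕ → ℝ) (n : ℕ)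
    (hv : ∀ i < n, v i ∈ varSums G (x i) (x (i + 1))) :
    ∑ i ∈ Finset.range n, v i ∈ varSums G (x 0) (x n) := by
  induction n with
  | zero => simpa using zero_mem_varSums G (x 0)
  | succ n ih =>
    rw [Finset.sum_range_succ]
    exact add_mem_varSums G (ih fun i hi => hv i (hi.trans n.lt_succ_self)) (hv n n.lt_succ_self)

end Variation

section Overlap

variable {K : Type*} [LinearOrder K] (G : K → ℝ) {a b c d p q : K}

/-- The increment of `G` over `(a, b] ∩ (c, d]`, and `0` when this intersection is empty. -/
def overlapIncr (a b c d : K) : ℝ :=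
  G (max (max a c) (min b d)) - G (max a c)

lemma overlapIncr_comm (a b c d : K) : overlapIncr G a b c d = overlapIncr G c d a b := by
  rw [overlapIncr, overlapIncr, max_comm a c, min_comm b d]

lemma overlapIncr_eq_sub (hab : a ≤ b) (hcd : c ≤ d) :
    overlapIncr G a b c d = G (max a (min b d)) - G (max a (min b c)) := by
  unfold overlapIncr
  rcases le_total d a with hda | had
  · have hca := hcd.trans hda
    simp [hda, hca, min_eq_right (hda.trans hab), min_eq_right (hca.trans hab)]
  rcases le_total b c with hbc | hcb
  · simp [hbc, hab.trans hbc, hbc.trans hcd, hab]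
  simp [had, hcb, hab, hcd]

lemma min_mem_of_overlapIncr_ne_zero (h : overlapIncr G a b c d ≠ 0) :
    min b d ∈ Ioc a b ∩ Ioc c d := by
  have hlt : max a c < min b d := by
    by_contra! hle
    exact h (by simp [overlapIncr, max_eq_left hle])
  simp only [max_lt_iff, lt_min_iff] at hlt
  exact ⟨⟨by simp [hlt], min_le_left _ _⟩, ⟨by simp [hlt], min_le_right _ _⟩⟩

def TaggedPartition.projIcc (Q : TaggedPartition K p q) (hab : a ≤ b) (hpa : p ≤ a)
    (hbq : b ≤ q) : TaggedPartition K a b where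
  n := Q.n
  x k := max a (min b (Q.x k))
  t k := max a (min b (Q.t k))
  x_zero := by simp [Q.x_zero, min_eq_right (hpa.trans hab), hpa]
  x_last := by simp [Q.x_last, hbq, hab]
  mono k hk := max_le_max le_rfl (min_le_min le_rfl (Q.mono k hk))
  tag_mem k hk := ⟨max_le_max le_rfl (min_le_min le_rfl (Q.tag_mem k hk).1),
    max_le_max le_rfl (min_le_min le_rfl (Q.tag_mem k hk).2)⟩

lemma TaggedPartition.overlapIncr_eq_projIcc (Q : TaggedPartition K p q) (hab : a ≤ b)
    (hpa : p ≤ a) (hbq : b ≤ q) {k : ℕ} (hk : k < Q.n) :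
    overlapIncr G a b (Q.x k) (Q.x (k + 1))
      = G ((Q.projIcc hab hpa hbq).x (k + 1)) - G ((Q.projIcc hab hpa hbq).x k) :=
  overlapIncr_eq_sub G hab (Q.mono k hk)

lemma sum_overlapIncr (Q : TaggedPartition K p q) (hab : a ≤ b) (hpa : p ≤ a) (hbq : b ≤ q) :
    ∑ k ∈ Finset.range Q.n, overlapIncr G a b (Q.x k) (Q.x (k + 1)) = G b - G a := by
  rw [Finset.sum_congr rfl fun k hk =>
    Q.overlapIncr_eq_projIcc G hab hpa hbq (Finset.mem_range.1 hk)]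
  exact (Q.projIcc hab hpa hbq).sum_sub_eq G

lemma sum_abs_overlapIncr_mem_varSums (Q : TaggedPartition K p q) (hab : a ≤ b) (hpa : p ≤ a)
    (hbq : b ≤ q) :
    ∑ k ∈ Finset.range Q.n, |overlapIncr G a b (Q.x k) (Q.x (k + 1))| ∈ varSums G a b := by
  rw [Finset.sum_congr rfl fun k hk => by
    rw [Q.overlapIncr_eq_projIcc G hab hpa hbq (Finset.mem_range.1 hk)]]
  exact (Q.projIcc hab hpa hbq).sum_abs_sub_mem_varSums G

end Overlap

section RiemannSum

variable {K : Type*} [LinearOrder K] {a b : K} (f G : K → ℝ)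

lemma riemannSum_sub_riemannSum (P Q : TaggedPartition K a b) :
    riemannSum f G P - riemannSum f G Q
      = ∑ i ∈ Finset.range P.n, ∑ k ∈ Finset.range Q.n, (f (P.t (i + 1)) - f (Q.t (k + 1)))
          * overlapIncr G (P.x i) (P.x (i + 1)) (Q.x k) (Q.x (k + 1)) := by
  set D := fun i k => overlapIncr G (P.x i) (P.x (i + 1)) (Q.x k) (Q.x (k + 1))
  have hP : ∑ i ∈ Finset.range P.n, f (P.t (i + 1)) * (G (P.x (i + 1)) - G (P.x i))
      = ∑ i ∈ Finset.range P.n, ∑ k ∈ Finset.range Q.n, f (P.t (i + 1)) * D i k := by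
    refine Finset.sum_congr rfl fun i hi => ?_
    have hi := Finset.mem_range.1 hi
    rw [← Finset.mul_sum,
      sum_overlapIncr G Q (P.mono i hi) (P.x_mem_Icc hi.le).1 (P.x_mem_Icc hi).2]
  have hQ : ∑ k ∈ Finset.range Q.n, f (Q.t (k + 1)) * (G (Q.x (k + 1)) - G (Q.x k))
      = ∑ i ∈ Finset.range P.n, ∑ k ∈ Finset.range Q.n, f (Q.t (k + 1)) * D i k := by
    rw [Finset.sum_comm]
    refine Finset.sum_congr rfl fun k hk => ?_
    have hk := Finset.mem_range.1 hk
    simp only [D, overlapIncr_comm G (P.x _)]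
    rw [← Finset.mul_sum,
      sum_overlapIncr G P (Q.mono k hk) (Q.x_mem_Icc hk.le).1 (Q.x_mem_Icc hk).2]
  rw [riemannSum, riemannSum, add_sub_add_left_eq_sub, hP, hQ, ← Finset.sum_sub_distrib]
  simp only [D, ← Finset.sum_sub_distrib, sub_mul]

theorem abs_riemannSum_sub_le {δ : K → Set K} {ε V : ℝ} (hε : 0 ≤ ε)
    (hδ : ∀ t, δ t ⊆ f ⁻¹' Metric.ball (f t) ε) (hV : V ∈ upperBounds (varSums G a b))
    {P Q : TaggedPartition K a b} (hP : P.IsFine δ) (hQ : Q.IsFine δ) :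
    |riemannSum f G P - riemannSum f G Q| ≤ 2 * ε * V := by
  set D := fun i k => overlapIncr G (P.x i) (P.x (i + 1)) (Q.x k) (Q.x (k + 1))
  have hterm : ∀ i < P.n, ∀ k < Q.n,
      |(f (P.t (i + 1)) - f (Q.t (k + 1))) * D i k| ≤ 2 * ε * |D i k| := by
    intro i hi k hk
    rw [abs_mul]
    by_cases hD : D i k = 0
    · simp [hD]
    obtain ⟨hzP, hzQ⟩ := min_mem_of_overlapIncr_ne_zero G hD
    refine mul_le_mul_of_nonneg_right ?_ (abs_nonneg _)
    set z := min (P.x (i + 1)) (Q.x (k + 1))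
    have h₁ : dist (f z) (f (P.t (i + 1))) < ε := hδ _ (hP i hi hzP)
    have h₂ : dist (f z) (f (Q.t (k + 1))) < ε := hδ _ (hQ k hk hzQ)
    rw [← Real.dist_eq]
    linarith [dist_triangle_left (f (P.t (i + 1))) (f (Q.t (k + 1))) (f z)]
  have hvar : ∑ i ∈ Finset.range P.n, ∑ k ∈ Finset.range Q.n, |D i k| ≤ V := by
    refine hV ?_
    have := sum_mem_varSums G P.x _ P.n fun i hi => sum_abs_overlapIncr_mem_varSums G Q
      (P.mono i hi) (P.x_mem_Icc hi.le).1 (P.x_mem_Icc hi).2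
    rwa [P.x_zero, P.x_last] at this
  rw [riemannSum_sub_riemannSum]
  calc _ ≤ ∑ i ∈ Finset.range P.n, ∑ k ∈ Finset.range Q.n, 2 * ε * |D i k| := by
        refine (Finset.abs_sum_le_sum_abs _ _).trans (Finset.sum_le_sum fun i hi => ?_)
        refine (Finset.abs_sum_le_sum_abs _ _).trans (Finset.sum_le_sum fun k hk => ?_)
        exact hterm i (Finset.mem_range.1 hi) k (Finset.mem_range.1 hk)
    _ = 2 * ε * ∑ i ∈ Finset.range P.n, ∑ k ∈ Finset.range Q.n, |D i k| := by
        simp only [Finset.mul_sum]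
    _ ≤ 2 * ε * V := mul_le_mul_of_nonneg_left hvar (by positivity)

end RiemannSum

lemma abs_riemannSum_le {K : Type*} [LinearOrder K] {a b : K} {f : K → ℝ} (G : K → ℝ) {M V : ℝ}
    (hM : ∀ x, |f x| ≤ M) (hV : V ∈ upperBounds (varSums G a b)) (P : TaggedPartition K a b) :
    |riemannSum f G P| ≤ |f a * G a| + M * V := by
  refine (abs_add_le _ _).trans (add_le_add_right ?_ _)
  calc |∑ i ∈ Finset.range P.n, f (P.t (i + 1)) * (G (P.x (i + 1)) - G (P.x i))|
      ≤ ∑ i ∈ Finset.range P.n, M * |G (P.x (i + 1)) - G (P.x i)| := by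
        refine (Finset.abs_sum_le_sum_abs _ _).trans (Finset.sum_le_sum fun i _ => ?_)
        rw [abs_mul]
        exact mul_le_mul_of_nonneg_right (hM _) (abs_nonneg _)
    _ ≤ M * V := by
        rw [← Finset.mul_sum]
        exact mul_le_mul_of_nonneg_left (hV (P.sum_abs_sub_mem_varSums G))
          ((abs_nonneg _).trans (hM a))

section Integral

variable {K : Type*} [LinearOrder K] [TopologicalSpace K] [OrderTopology K] [BoundedOrder K]
  [CompactSpace K] {f G : K → ℝ}

theorem exists_hasIntegral_of_cauchy
    (h : ∀ ε > 0, ∃ δ, IsGauge K ⊥ ⊤ δ ∧ ∀ P Q : TaggedPartition K ⊥ ⊤, P.IsFine δ → Q.IsFine δ →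
      |riemannSum f G P - riemannSum f G Q| ≤ ε) :
    ∃ A, HasIntegral f G ⊥ ⊤ A := by
  choose δ hδ hS using fun k : ℕ => h (1 / (k + 1)) Nat.one_div_pos_of_nat
  -- `P k` is fine for all of `δ 0, …, δ k`.
  choose P hP using fun k =>
    exists_isFine_of_isGauge (Finset.inf_induction isGauge_top (fun _ h₁ _ h₂ => h₁.inf h₂)
      fun j (_ : j ∈ Finset.range (k + 1)) => hδ j)
  have hfine : ∀ j k, j ≤ k → (P k).IsFine (δ j) := fun j k hjk =>
    (hP k).mono (Finset.inf_le (Finset.mem_range_succ_iff.2 hjk))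
  obtain ⟨A, hA⟩ := cauchySeq_tendsto_of_complete <|
    cauchySeq_of_le_tendsto_0 _ (fun m n N hm hn => (Real.dist_eq _ _).trans_le
      (hS N _ _ (hfine N m hm) (hfine N n hn))) tendsto_one_div_add_atTop_nhds_zero_nat
  refine ⟨A, fun ε hε => ?_⟩
  obtain ⟨N, hN⟩ := exists_nat_one_div_lt hε
  refine ⟨δ N, hδ N, fun Q hQ => lt_of_le_of_lt ?_ hN⟩
  exact le_of_tendsto (tendsto_const_nhds.sub hA).abs
    (eventually_atTop.2 ⟨N, fun k hk => hS N Q (P k) hQ (hfine N k hk)⟩)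

lemma abs_le_of_hasIntegral {A B : ℝ} (hA : HasIntegral f G ⊥ ⊤ A)
    (hB : ∀ P : TaggedPartition K ⊥ ⊤, |riemannSum f G P| ≤ B) : |A| ≤ B := by
  refine le_of_forall_pos_lt_add fun ε hε => ?_
  obtain ⟨δ, hδ, hS⟩ := hA ε hε
  obtain ⟨P, hP⟩ := exists_isFine_of_isGauge hδ
  linarith [hB P, hS P hP, abs_sub_comm A (riemannSum f G P),
    abs_sub_abs_le_abs_sub A (riemannSum f G P)]

end Integral

lemma exists_isGauge_abs_riemannSum_sub_le {K : Type*} [LinearOrder K] [TopologicalSpace K]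
    [OrderTopology K] [BoundedOrder K] {f : K → ℝ} (G : K → ℝ) (hf : Continuous f) {V : ℝ}
    (hV : V ∈ upperBounds (varSums G ⊥ ⊤)) {ε : ℝ} (hε : 0 < ε) :
    ∃ δ, IsGauge K ⊥ ⊤ δ ∧ ∀ P Q : TaggedPartition K ⊥ ⊤, P.IsFine δ → Q.IsFine δ →
      |riemannSum f G P - riemannSum f G Q| ≤ ε := by
  have hV₀ : 0 ≤ V := (abs_nonneg _).trans (hV (abs_sub_mem_varSums G bot_le))
  set η := ε / (2 * (V + 1))
  have hη : 0 < η := by positivity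
  refine ⟨_, isGauge_ordConnectedComponent (fun t => Metric.isOpen_ball.preimage hf)
    (fun t => Metric.mem_ball_self hη), fun P Q hP hQ => ?_⟩
  refine (abs_riemannSum_sub_le f G hη.le (fun t => ordConnectedComponent_subset) hV hP hQ).trans ?_
  calc 2 * η * V = ε * (V / (V + 1)) := by simp only [η]; field_simp
    _ ≤ ε := mul_le_of_le_one_right hε.le ((div_le_one (by positivity)).2 (by linarith))

theorem continuous_integrable_of_bounded_variation {K : Type*} [LinearOrder K]
    [TopologicalSpace K] [OrderTopology K] [CompactSpace K] [BoundedOrder K]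
    (G f : K → ℝ) (hG : BddAbove (varSums G (⊥ : K) ⊤)) (hf : Continuous f) :
    ∃ A, HasIntegral f G (⊥ : K) ⊤ A ∧
      |A| ≤ |f ⊥ * G ⊥| + (⨆ x : K, |f x|) * sSup (varSums G (⊥ : K) ⊤) := by
  have hV : sSup (varSums G ⊥ ⊤) ∈ upperBounds (varSums G ⊥ ⊤) := fun _ hv => le_csSup hG hv
  have hM : ∀ x, |f x| ≤ ⨆ x : K, |f x| := le_ciSup (isCompact_range hf.abs).bddAbove
  obtain ⟨A, hA⟩ := exists_hasIntegral_of_cauchy fun ε hε =>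
    exists_isGauge_abs_riemannSum_sub_le G hf hV hε
  exact ⟨A, hA, abs_le_of_hasIntegral hA (abs_riemannSum_le G hM hV)⟩
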